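/- arXiv:2207.09226 — 4 statements merged into one kernel-verified Lean document; each statement's English description precedes it below -/
import Mathlib

section
/- Every Π¹₁-KROM^r formula is equivalent on all finite structures to a first-order formula of the form ∀x̄ φ, where φ is quantifier-free and in conjunctive normal form. -/
/-- A finite relational vocabulary: a type of relation symbols with arities. -/
structure Vocab where
  Rel : Type
  arity : Rel → ℕ

/-- A structure over a relational vocabulary. -/
structure Struct (σ : Vocab) where
  Dom : Type
  rel : (r : σ.Rel) → (Fin (σ.arity r) → Dom) → Prop

namespace SOKrom

variable {σ : Vocab}

/-- A valuation of `m` second-order relation variables with arities `ar` over a domain `D`. -/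
abbrev Val (m : ℕ) (ar : Fin m → ℕ) (D : Type) := (i : Fin m) → Set (Fin (ar i) → D)

/-- First-order literals over `σ` (atomic or negated atomic, including equality). -/
inductive FOLit (σ : Vocab) : Type
  | pos (r : σ.Rel) (args : Fin (σ.arity r) → ℕ)
  | neg (r : σ.Rel) (args : Fin (σ.arity r) → ℕ)
  | eq (a b : ℕ)
  | ne (a b : ℕ)

def FOLit.Sat (A : Struct σ) (s : ℕ → A.Dom) : FOLit σ → Prop
  | .pos r args => A.rel r (fun i => s (args i))
  | .neg r args => ¬ A.rel r (fun i => s (args i))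
  | .eq a b => s a = s b
  | .ne a b => s a ≠ s b

/-- Second-order literals w.r.t. relation variables `R₀,…,R_{m-1}` of arities `ar`:
`Rᵢ z̄`, `¬ Rᵢ z̄`, `∃z̄ Rᵢ z̄` (revised Krom only) or `⊥`. -/
inductive SOLit (m : ℕ) (ar : Fin m → ℕ) : Type
  | pos (i : Fin m) (args : Fin (ar i) → ℕ)
  | neg (i : Fin m) (args : Fin (ar i) → ℕ)
  | ex (i : Fin m)
  | bot

/-- A second-order literal is a (non-revised) Krom literal iff it is not of the
form `∃z̄ Rᵢ z̄`. -/
def SOLit.isKrom {m : ℕ} {ar : Fin m → ℕ} : SOLit m ar → Prop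
  | .ex _ => False
  | _ => True

def SOLit.Sat {m : ℕ} {ar : Fin m → ℕ} (A : Struct σ) (V : Val m ar A.Dom)
    (s : ℕ → A.Dom) : SOLit m ar → Prop
  | .pos i args => (fun j => s (args j)) ∈ V i
  | .neg i args => (fun j => s (args j)) ∉ V i
  | .ex i => ∃ t, t ∈ V i
  | .bot => False

/-- A (revised) Krom clause: finitely many first-order literals and two
second-order literals. -/
structure Clause (σ : Vocab) (m : ℕ) (ar : Fin m → ℕ) where
  fo : List (FOLit σ)
  h1 : SOLit m ar
  h2 : SOLit m ar

def Clause.Sat (A : Struct σ) {m : ℕ} {ar : Fin m → ℕ} (V : Val m ar A.Dom)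
    (s : ℕ → A.Dom) (C : Clause σ m ar) : Prop :=
  (∃ l ∈ C.fo, l.Sat A s) ∨ C.h1.Sat A V s ∨ C.h2.Sat A V s

/-- An SO-KROM^r formula: a second-order quantifier prefix
`Q₀R₀ ⋯ Q_{m-1}R_{m-1}` (`qt i = true` meaning `∃`, `false` meaning `∀`)
followed by `∀x̄ (C₁ ∧ ⋯ ∧ Cₙ)` where `x̄` are the first-order variables
with index `< nvars` and the `Cⱼ` are revised Krom clauses. -/
structure KromR (σ : Vocab) where
  m : ℕ
  ar : Fin m → ℕ
  qt : Fin m → Bool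
  nvars : ℕ
  clauses : List (Clause σ m ar)

/-- The matrix `∀x̄ (C₁ ∧ ⋯ ∧ Cₙ)` evaluated in environment `e`. -/
def KromR.Matrix (Φ : KromR σ) (A : Struct σ) (V : Val Φ.m Φ.ar A.Dom)
    (e : ℕ → A.Dom) : Prop :=
  ∀ s : ℕ → A.Dom, (∀ j, Φ.nvars ≤ j → s j = e j) → ∀ C ∈ Φ.clauses, C.Sat A V s

def KromR.satAux (Φ : KromR σ) (A : Struct σ) (e : ℕ → A.Dom)
    (V : Val Φ.m Φ.ar A.Dom) (j : ℕ) : Prop :=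
  if h : j < Φ.m then
    if Φ.qt ⟨j, h⟩ then
      ∃ S, Φ.satAux A e (Function.update V ⟨j, h⟩ S) (j + 1)
    else
      ∀ S, Φ.satAux A e (Function.update V ⟨j, h⟩ S) (j + 1)
  else Φ.Matrix A V e
termination_by Φ.m - j

/-- Satisfaction of an SO-KROM^r formula in a structure `A` under a first-order
environment `e`. -/
def KromR.Sat (Φ : KromR σ) (A : Struct σ) (e : ℕ → A.Dom) : Prop :=
  Φ.satAux A e (fun _ => ∅) 0

/-- `Φ` is a (non-revised) SO-KROM formula iff no clause uses a literal
`∃z̄ Rᵢ z̄`. -/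
def KromR.isKrom (Φ : KromR σ) : Prop :=
  ∀ C ∈ Φ.clauses, C.h1.isKrom ∧ C.h2.isKrom

/-- Number of alternations in a quantifier prefix. -/
def altCount : List Bool → ℕ
  | [] => 0
  | [_] => 0
  | a :: b :: l => (if a = b then 0 else 1) + altCount (b :: l)

def KromR.prefixList (Φ : KromR σ) : List Bool := List.ofFn Φ.qt

/-- `Φ` is a `Σ¹ₖ`(-KROM^r) formula: its second-order prefix starts with an
existential quantifier and alternates `k - 1` times. -/
def KromR.IsSigma (k : ℕ) (Φ : KromR σ) : Prop :=
  Φ.prefixList.head? = some true ∧ altCount Φ.prefixList = k - 1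

/-- `Φ` is a `Π¹ₖ`(-KROM^r) formula: its second-order prefix starts with a
universal quantifier and alternates `k - 1` times. -/
def KromR.IsPi (k : ℕ) (Φ : KromR σ) : Prop :=
  Φ.prefixList.head? = some false ∧ altCount Φ.prefixList = k - 1

end SOKrom

namespace SOKrom

variable {σ : Vocab}

/-- First-order formulas over `σ`, possibly with free occurrences of `m`
second-order relation variables of arities `ar`. -/
inductive FO (σ : Vocab) (m : ℕ) (ar : Fin m → ℕ) : Type
  | rel (r : σ.Rel) (args : Fin (σ.arity r) → ℕ)
  | svar (i : Fin m) (args : Fin (ar i) → ℕ)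
  | equal (a b : ℕ)
  | not (φ : FO σ m ar)
  | and (φ ψ : FO σ m ar)
  | or (φ ψ : FO σ m ar)
  | all (v : ℕ) (φ : FO σ m ar)
  | ex (v : ℕ) (φ : FO σ m ar)

def FO.Sat (A : Struct σ) {m : ℕ} {ar : Fin m → ℕ} (V : Val m ar A.Dom) :
    FO σ m ar → (ℕ → A.Dom) → Prop
  | .rel r args, e => A.rel r (fun i => e (args i))
  | .svar i args, e => (fun j => e (args j)) ∈ V i
  | .equal a b, e => e a = e b
  | .not φ, e => ¬ φ.Sat A V e
  | .and φ ψ, e => φ.Sat A V e ∧ ψ.Sat A V e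
  | .or φ ψ, e => φ.Sat A V e ∨ ψ.Sat A V e
  | .all v φ, e => ∀ a, φ.Sat A V (Function.update e v a)
  | .ex v φ, e => ∃ a, φ.Sat A V (Function.update e v a)

/-- A second-order formula in prenex form: a prefix of second-order
quantifiers (`qt i = true` meaning `∃`, `false` meaning `∀`) followed by a
first-order formula. -/
structure SOForm (σ : Vocab) where
  m : ℕ
  ar : Fin m → ℕ
  qt : Fin m → Bool
  matrix : FO σ m ar

def SOForm.satAux (Φ : SOForm σ) (A : Struct σ) (e : ℕ → A.Dom)
    (V : Val Φ.m Φ.ar A.Dom) (j : ℕ) : Prop :=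
  if h : j < Φ.m then
    if Φ.qt ⟨j, h⟩ then
      ∃ S, Φ.satAux A e (Function.update V ⟨j, h⟩ S) (j + 1)
    else
      ∀ S, Φ.satAux A e (Function.update V ⟨j, h⟩ S) (j + 1)
  else Φ.matrix.Sat A V e
termination_by Φ.m - j

def SOForm.Sat (Φ : SOForm σ) (A : Struct σ) (e : ℕ → A.Dom) : Prop :=
  Φ.satAux A e (fun _ => ∅) 0

/-- `Φ` is a `Σ¹ₖ` second-order formula. -/
def SOForm.IsSigma (k : ℕ) (Φ : SOForm σ) : Prop :=
  (List.ofFn Φ.qt).head? = some true ∧ altCount (List.ofFn Φ.qt) = k - 1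

/-- `Φ` is a `Π¹ₖ` second-order formula. -/
def SOForm.IsPi (k : ℕ) (Φ : SOForm σ) : Prop :=
  (List.ofFn Φ.qt).head? = some false ∧ altCount (List.ofFn Φ.qt) = k - 1

/-- `Φ` is a `Π¹₁` formula: a block of universal second-order quantifiers
followed by a first-order formula. -/
def SOForm.IsPi11 (Φ : SOForm σ) : Prop := ∀ i, Φ.qt i = false

/-! ### Ordered structures -/

/-- The extra symbols of ordered structures: a linear order `≤`, the successor
relation, and the least and greatest elements (as unary predicates). -/
inductive OrdSym : Type
  | le | succ | min | max

def ordArity : OrdSym → ℕ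
  | .le => 2
  | .succ => 2
  | .min => 1
  | .max => 1

/-- The vocabulary `σ` enlarged with the order symbols. -/
def withOrder (σ : Vocab) : Vocab where
  Rel := σ.Rel ⊕ OrdSym
  arity := Sum.elim σ.arity ordArity

/-- `A` is an ordered structure: `≤` is interpreted as a linear order of the
domain, `SUCC` as the associated successor relation, and `min`/`max` hold
exactly of the least/greatest elements. -/
def IsOrdered (A : Struct (withOrder σ)) : Prop :=
  ∃ _ : LinearOrder A.Dom,
    (∀ a b : A.Dom, A.rel (Sum.inr OrdSym.le) ![a, b] ↔ a ≤ b) ∧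
    (∀ a b : A.Dom, A.rel (Sum.inr OrdSym.succ) ![a, b] ↔
      (a < b ∧ ∀ c, ¬(a < c ∧ c < b))) ∧
    (∀ a : A.Dom, A.rel (Sum.inr OrdSym.min) ![a] ↔ ∀ b, a ≤ b) ∧
    (∀ a : A.Dom, A.rel (Sum.inr OrdSym.max) ![a] ↔ ∀ b, b ≤ a)

end SOKrom

namespace SOKrom

variable {σ : Vocab}

/-! ### Extended Krom logic (SO-EKROM) -/

/-- Literals allowed in the first-order part of an extended Krom clause:
atomic or negated atomic formulas whose relation symbol is in
`τ ∪ {X₁,…,Xₖ}` (including equality). -/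
inductive ELit (σ : Vocab) (m : ℕ) (ar : Fin m → ℕ) : Type
  | pos (r : σ.Rel) (args : Fin (σ.arity r) → ℕ)
  | neg (r : σ.Rel) (args : Fin (σ.arity r) → ℕ)
  | vpos (i : Fin m) (args : Fin (ar i) → ℕ)
  | vneg (i : Fin m) (args : Fin (ar i) → ℕ)
  | eq (a b : ℕ)
  | ne (a b : ℕ)

def ELit.Sat (A : Struct σ) {m : ℕ} {ar : Fin m → ℕ} (V : Val m ar A.Dom)
    (s : ℕ → A.Dom) : ELit σ m ar → Prop
  | .pos r args => A.rel r (fun i => s (args i))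
  | .neg r args => ¬ A.rel r (fun i => s (args i))
  | .vpos i args => (fun j => s (args j)) ∈ V i
  | .vneg i args => (fun j => s (args j)) ∉ V i
  | .eq a b => s a = s b
  | .ne a b => s a ≠ s b

/-- A positive or negated atomic formula `Yᵢ z̄` / `¬ Yᵢ z̄` with a
second-order relation variable. -/
structure HLit (m : ℕ) (ar : Fin m → ℕ) where
  sign : Bool
  i : Fin m
  args : Fin (ar i) → ℕ

def HLit.Sat {m : ℕ} {ar : Fin m → ℕ} {D : Type} (V : Val m ar D)
    (s : ℕ → D) (H : HLit m ar) : Prop :=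
  if H.sign then (fun j => s (H.args j)) ∈ V H.i
  else (fun j => s (H.args j)) ∉ V H.i

/-- An extended Krom clause `α₁ ∨ ⋯ ∨ α_l ∨ H₁ ∨ H₂`. -/
structure EClause (σ : Vocab) (m : ℕ) (ar : Fin m → ℕ) where
  fo : List (ELit σ m ar)
  h1 : HLit m ar
  h2 : HLit m ar

def EClause.Sat (A : Struct σ) {m : ℕ} {ar : Fin m → ℕ} (V : Val m ar A.Dom)
    (s : ℕ → A.Dom) (C : EClause σ m ar) : Prop :=
  (∃ l ∈ C.fo, l.Sat A V s) ∨ C.h1.Sat V s ∨ C.h2.Sat V s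

/-- An SO-EKROM formula `∀X₁∃Y₁⋯∀Xₖ∃Yₖ ∀x̄(C₁ ∧ ⋯ ∧ Cₙ)`: the second-order
prefix mixes universally quantified relation variables (the `X`'s, `qt i =
false`) and existentially quantified ones (the `Y`'s, `qt i = true`); the
well-formedness condition `wf` requires that in every clause the literals of
the first-order part only use `τ` and the `X`'s, while the two distinguished
literals `H₁, H₂` use `Y`'s. -/
structure EKrom (σ : Vocab) where
  m : ℕ
  ar : Fin m → ℕ
  qt : Fin m → Bool
  nvars : ℕ
  clauses : List (EClause σ m ar)
  wf : ∀ C ∈ clauses,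
    (∀ (i : Fin m) (args : Fin (ar i) → ℕ),
        (ELit.vpos i args ∈ C.fo ∨ ELit.vneg i args ∈ C.fo) → qt i = false) ∧
    qt C.h1.i = true ∧ qt C.h2.i = true

def EKrom.Matrix (Φ : EKrom σ) (A : Struct σ) (V : Val Φ.m Φ.ar A.Dom)
    (e : ℕ → A.Dom) : Prop :=
  ∀ s : ℕ → A.Dom, (∀ j, Φ.nvars ≤ j → s j = e j) → ∀ C ∈ Φ.clauses, C.Sat A V s

def EKrom.satAux (Φ : EKrom σ) (A : Struct σ) (e : ℕ → A.Dom)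
    (V : Val Φ.m Φ.ar A.Dom) (j : ℕ) : Prop :=
  if h : j < Φ.m then
    if Φ.qt ⟨j, h⟩ then
      ∃ S, Φ.satAux A e (Function.update V ⟨j, h⟩ S) (j + 1)
    else
      ∀ S, Φ.satAux A e (Function.update V ⟨j, h⟩ S) (j + 1)
  else Φ.Matrix A V e
termination_by Φ.m - j

def EKrom.Sat (Φ : EKrom σ) (A : Struct σ) (e : ℕ → A.Dom) : Prop :=
  Φ.satAux A e (fun _ => ∅) 0

/-- `Φ` is a `Π¹₂`-EKROM formula: all universal second-order quantifiers
precede all existential ones, i.e. the prefix has the form `∀X̄∃Ȳ`. -/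
def EKrom.IsPi2 (Φ : EKrom σ) : Prop :=
  ∀ i j : Fin Φ.m, i ≤ j → Φ.qt i = true → Φ.qt j = true

/-- The substructure of `A` induced by a subset `D` of its domain. -/
def Substruct (A : Struct σ) (D : Set A.Dom) : Struct σ where
  Dom := D
  rel := fun r v => A.rel r (fun i => (v i : A.Dom))

end SOKrom

namespace SOKrom

variable {σ : Vocab}

/-! ### Quantified Boolean formulas in DNF and their encoding as structures -/

/-- A closed quantified Boolean formula with `k` quantifier blocks and matrix
in disjunctive normal form: `nv` propositional variables, `blk x` being the
block in which variable `x` is quantified, and the matrix a disjunction of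
clauses, each clause a conjunction of literals `(sign, variable)` (with
`sign = true` for a positive literal). -/
structure QDNF (k : ℕ) where
  nv : ℕ
  blk : Fin nv → Fin k
  clauses : List (List (Bool × Fin nv))

def QDNF.evalMatrix {k : ℕ} (ψ : QDNF k) (v : Fin ψ.nv → Bool) : Prop :=
  ∃ C ∈ ψ.clauses, ∀ l ∈ C, v l.2 = l.1

/-- Truth of the quantified Boolean formula, quantifying the blocks
`h, h+1, …, k-1` in order; `sigma = true` means the prefix starts (at block 0)
with `∃`, and quantifiers alternate between consecutive blocks. -/
def QDNF.satBlk {k : ℕ} (ψ : QDNF k) (sigma : Bool) (v : Fin ψ.nv → Bool)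
    (h : ℕ) : Prop :=
  if hh : h < k then
    if (if h % 2 = 0 then sigma else !sigma) then
      ∃ u : Fin ψ.nv → Bool,
        ψ.satBlk sigma (fun x => if ψ.blk x = ⟨h, hh⟩ then u x else v x) (h + 1)
    else
      ∀ u : Fin ψ.nv → Bool,
        ψ.satBlk sigma (fun x => if ψ.blk x = ⟨h, hh⟩ then u x else v x) (h + 1)
  else ψ.evalMatrix v
termination_by k - h

/-- Truth of the closed QBF `ψ`, as a `Σₖ` sentence (`sigma = true`) or a `Πₖ`
sentence (`sigma = false`). -/
def QDNF.IsTrue {k : ℕ} (ψ : QDNF k) (sigma : Bool) : Prop :=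
  ψ.satBlk sigma (fun _ => false) 0

/-- The vocabulary `{Clause, Var₁, …, Varₖ, Pos, Neg}`: `Sum.inl 0` is the
unary symbol `Clause`, `Sum.inl ⟨h+1,_⟩` is the unary symbol `Var_{h+1}`,
`Sum.inr true` is the binary symbol `Pos` and `Sum.inr false` is `Neg`. -/
def qbfVocab (k : ℕ) : Vocab where
  Rel := Fin (k + 1) ⊕ Bool
  arity := Sum.elim (fun _ => 1) (fun _ => 2)

/-- The encoding of a QBF in DNF as a finite structure over
`{Clause, Var₁, …, Varₖ, Pos, Neg}`. -/
def QDNF.encode {k : ℕ} (ψ : QDNF k) : Struct (qbfVocab k) where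
  Dom := Fin ψ.clauses.length ⊕ Fin ψ.nv
  rel := fun r =>
    match r with
    | Sum.inl c => fun v : Fin 1 → (Fin ψ.clauses.length ⊕ Fin ψ.nv) =>
        if c.val = 0 then ∃ i, v 0 = Sum.inl i
        else ∃ x, v 0 = Sum.inr x ∧ (ψ.blk x).val + 1 = c.val
    | Sum.inr b => fun v : Fin 2 → (Fin ψ.clauses.length ⊕ Fin ψ.nv) =>
        ∃ (i : Fin ψ.clauses.length) (x : Fin ψ.nv),
          v 0 = Sum.inl i ∧ v 1 = Sum.inr x ∧ (b, x) ∈ ψ.clauses.get i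

/-! ### The target normal form `∃Y ∀x̄(∃ȳ Y z̄ȳ ∧ C₁ ∧ ⋯ ∧ Cₘ)` -/

/-- A formula of the form `∃Y ∀x̄(∃ȳ Y z̄ȳ ∧ C₁ ∧ ⋯ ∧ Cₘ)`, where `Y` is a
single second-order variable of arity `a`, the variables `x̄` are those of
index `< nvars`, `z̄` is a tuple of `p` variables from `x̄`, `ȳ` consists of
the remaining `a - p` argument positions of `Y`, and each `Cᵢ` is a
disjunction of atomic or negated atomic formulas over `σ ∪ {Y}`. -/
structure SkolemForm (σ : Vocab) where
  nvars : ℕ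
  a : ℕ
  p : ℕ
  hp : p ≤ a
  zs : Fin p → ℕ
  hz : ∀ i, zs i < nvars
  clauses : List (List (ELit σ 1 (fun _ => a)))

def SkolemForm.Sat (F : SkolemForm σ) (A : Struct σ) (e : ℕ → A.Dom) : Prop :=
  ∃ Y : Set (Fin F.a → A.Dom),
    ∀ s : ℕ → A.Dom, (∀ j, F.nvars ≤ j → s j = e j) →
      (∃ w : Fin F.a → A.Dom,
          w ∈ Y ∧ ∀ (i : Fin F.a) (h : i.val < F.p), w i = s (F.zs ⟨i.val, h⟩)) ∧
      ∀ C ∈ F.clauses, ∃ l ∈ C, ELit.Sat A (fun _ => Y) s l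

end SOKrom

namespace SOKrom

/-- A first-order formula `∀x̄ φ` with `φ` quantifier-free and in conjunctive
normal form (the universally quantified variables `x̄` are those of index
`< nvars`). -/
structure UnivCNF (σ : Vocab) where
  nvars : ℕ
  clauses : List (List (FOLit σ))

def UnivCNF.Sat {σ : Vocab} (φ : UnivCNF σ) (A : Struct σ) (e : ℕ → A.Dom) : Prop :=
  ∀ s : ℕ → A.Dom, (∀ j, φ.nvars ≤ j → s j = e j) →
    ∀ C ∈ φ.clauses, ∃ l ∈ C, l.Sat A s

section Aux

variable {σ : Vocab}

/-- CNF translation of `∀V (fo ∨ H1 ∨ H2)` for two SO literals. -/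
def soPairCNF {m : ℕ} {ar : Fin m → ℕ} (fo : List (FOLit σ)) :
    SOLit m ar → SOLit m ar → List (List (FOLit σ))
  | .pos i a1, .neg i' a2 =>
      if h : i = i' then
        List.ofFn (fun j : Fin (ar i) =>
          fo ++ [FOLit.eq (a1 j) (a2 (Fin.cast (by rw [h]) j))])
      else [fo]
  | .neg i' a2, .pos i a1 =>
      if h : i = i' then
        List.ofFn (fun j : Fin (ar i) =>
          fo ++ [FOLit.eq (a1 j) (a2 (Fin.cast (by rw [h]) j))])
      else [fo]
  | .neg i _, .ex i' => if i = i' then [] else [fo]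
  | .ex i', .neg i _ => if i = i' then [] else [fo]
  | _, _ => [fo]

lemma falsify_case {m : ℕ} {ar : Fin m → ℕ} (A : Struct σ) (s : ℕ → A.Dom)
    (fo : List (FOLit σ)) (H1 H2 : SOLit m ar) (V0 : Val m ar A.Dom)
    (h1 : ¬ H1.Sat A V0 s) (h2 : ¬ H2.Sat A V0 s) :
    (∀ V : Val m ar A.Dom,
        (∃ l ∈ fo, l.Sat A s) ∨ H1.Sat A V s ∨ H2.Sat A V s) ↔
      ∀ D ∈ [fo], ∃ l ∈ D, FOLit.Sat A s l := by
  simp only [List.mem_singleton, forall_eq]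
  constructor
  · intro H
    rcases H V0 with h | h | h
    · exact h
    · exact absurd h h1
    · exact absurd h h2
  · intro H V; exact Or.inl H

lemma eq_case {m : ℕ} {ar : Fin m → ℕ} (A : Struct σ) (s : ℕ → A.Dom)
    (fo : List (FOLit σ)) (i : Fin m) (a1 a2 : Fin (ar i) → ℕ) :
    (∀ V : Val m ar A.Dom,
        (∃ l ∈ fo, l.Sat A s) ∨ (fun j => s (a1 j)) ∈ V i ∨
          (fun j => s (a2 j)) ∉ V i) ↔
      ∀ j : Fin (ar i), ∃ l ∈ fo ++ [FOLit.eq (a1 j) (a2 j)], l.Sat A s := by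
  constructor
  · intro H j
    rcases H (Function.update (fun _ => (∅ : Set _)) i {fun j => s (a2 j)}) with
      h | h | h
    · obtain ⟨l, hl, hs⟩ := h
      exact ⟨l, List.mem_append_left _ hl, hs⟩
    · rw [Function.update_self] at h
      refine ⟨FOLit.eq (a1 j) (a2 j), List.mem_append_right _ (List.mem_singleton_self _), ?_⟩
      exact congrFun h j
    · rw [Function.update_self] at h
      exact absurd rfl h
  · intro H V
    by_cases hfo : ∃ l ∈ fo, l.Sat A s
    · exact Or.inl hfo
    · have heq : (fun j => s (a1 j)) = fun j => s (a2 j) := by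
        funext j
        rcases H j with ⟨l, hl, hs⟩
        rcases List.mem_append.1 hl with hl | hl
        · exact absurd ⟨l, hl, hs⟩ hfo
        · rw [List.mem_singleton.1 hl] at hs; exact hs
      by_cases hmem : (fun j => s (a2 j)) ∈ V i
      · exact Or.inr (Or.inl (heq ▸ hmem))
      · exact Or.inr (Or.inr hmem)

lemma true_case {m : ℕ} {ar : Fin m → ℕ} (A : Struct σ) (s : ℕ → A.Dom)
    (fo : List (FOLit σ)) (i : Fin m) (a1 : Fin (ar i) → ℕ) (V : Val m ar A.Dom) :
    (∃ l ∈ fo, l.Sat A s) ∨ (fun j => s (a1 j)) ∉ V i ∨ (∃ t, t ∈ V i) := by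
  by_cases h : ∃ t, t ∈ V i
  · exact Or.inr (Or.inr h)
  · exact Or.inr (Or.inl (fun hm => h ⟨_, hm⟩))

/-- The key semantic lemma: quantifying a Krom clause universally over all
second-order valuations yields the CNF `soPairCNF`. -/
lemma pair_char {m : ℕ} {ar : Fin m → ℕ} (A : Struct σ) (s : ℕ → A.Dom)
    (fo : List (FOLit σ)) (H1 H2 : SOLit m ar) :
    (∀ V : Val m ar A.Dom,
        (∃ l ∈ fo, l.Sat A s) ∨ H1.Sat A V s ∨ H2.Sat A V s) ↔
      ∀ D ∈ soPairCNF fo H1 H2, ∃ l ∈ D, FOLit.Sat A s l := by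
  cases H1 with
  | pos i a1 =>
    cases H2 with
    | pos i' a2 =>
      exact falsify_case A s fo _ _ (fun _ => ∅) (by simp [SOLit.Sat])
        (by simp [SOLit.Sat])
    | neg i' a2 =>
      by_cases h : i = i'
      · subst h
        rw [show soPairCNF fo (SOLit.pos i a1) (SOLit.neg i a2) =
            List.ofFn (fun j : Fin (ar i) => fo ++ [FOLit.eq (a1 j) (a2 j)]) by
          simp [soPairCNF]]
        simp only [List.mem_ofFn, SOLit.Sat]
        rw [eq_case A s fo i a1 a2]
        constructor
        · rintro H D ⟨j, rfl⟩; exact H j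
        · intro H j; exact H _ ⟨j, rfl⟩
      · rw [show soPairCNF fo (SOLit.pos i a1) (SOLit.neg i' a2) = [fo] by
          simp [soPairCNF, dif_neg h]]
        exact falsify_case A s fo _ _
          (Function.update (fun _ => (Set.univ : Set _)) i ∅)
          (by simp [SOLit.Sat])
          (by simp [SOLit.Sat, Function.update_of_ne (Ne.symm h)])
    | ex i' =>
      exact falsify_case A s fo _ _ (fun _ => ∅) (by simp [SOLit.Sat])
        (by simp [SOLit.Sat])
    | bot =>
      exact falsify_case A s fo _ _ (fun _ => ∅) (by simp [SOLit.Sat])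
        (by simp [SOLit.Sat])
  | neg i a1 =>
    cases H2 with
    | pos i' a2 =>
      by_cases h : i' = i
      · subst h
        rw [show soPairCNF fo (SOLit.neg i' a1) (SOLit.pos i' a2) =
            List.ofFn (fun j : Fin (ar i') => fo ++ [FOLit.eq (a2 j) (a1 j)]) by
          simp [soPairCNF]]
        simp only [List.mem_ofFn, SOLit.Sat]
        have := eq_case A s fo i' a2 a1
        constructor
        · intro H D ⟨j, hj⟩
          subst hj
          exact this.1 (fun V => (H V).imp_right Or.symm) j
        · intro H V
          exact ((this.2 fun j => H _ ⟨j, rfl⟩) V).imp_right Or.symm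
      · rw [show soPairCNF fo (SOLit.neg i a1) (SOLit.pos i' a2) = [fo] by
          simp [soPairCNF, dif_neg h]]
        exact falsify_case A s fo _ _
          (Function.update (fun _ => (Set.univ : Set _)) i' ∅)
          (by simp [SOLit.Sat, Function.update_of_ne (Ne.symm h)])
          (by simp [SOLit.Sat])
    | neg i' a2 =>
      exact falsify_case A s fo _ _ (fun _ => Set.univ) (by simp [SOLit.Sat])
        (by simp [SOLit.Sat])
    | ex i' =>
      by_cases h : i = i'
      · subst h
        rw [show soPairCNF fo (SOLit.neg i a1) (SOLit.ex i) = [] by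
          simp [soPairCNF]]
        simp only [List.not_mem_nil, false_implies, implies_true, iff_true]
        intro V; exact true_case A s fo i a1 V
      · rw [show soPairCNF fo (SOLit.neg i a1) (SOLit.ex i') = [fo] by
          simp [soPairCNF, if_neg h]]
        exact falsify_case A s fo _ _
          (Function.update (fun _ => (∅ : Set _)) i Set.univ)
          (by simp [SOLit.Sat])
          (by simp [SOLit.Sat, Function.update_of_ne (Ne.symm h)])
    | bot =>
      exact falsify_case A s fo _ _ (fun _ => Set.univ) (by simp [SOLit.Sat])
        (by simp [SOLit.Sat])
  | ex i =>
    cases H2 with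
    | pos i' a2 =>
      exact falsify_case A s fo _ _ (fun _ => ∅) (by simp [SOLit.Sat])
        (by simp [SOLit.Sat])
    | neg i' a2 =>
      by_cases h : i' = i
      · subst h
        rw [show soPairCNF fo (SOLit.ex i') (SOLit.neg i' a2) = [] by
          simp [soPairCNF]]
        simp only [List.not_mem_nil, false_implies, implies_true, iff_true]
        intro V
        exact ((true_case A s fo i' a2 V).imp_right Or.symm)
      · rw [show soPairCNF fo (SOLit.ex i) (SOLit.neg i' a2) = [fo] by
          simp [soPairCNF, if_neg h]]
        exact falsify_case A s fo _ _
          (Function.update (fun _ => (∅ : Set _)) i' Set.univ)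
          (by simp [SOLit.Sat, Function.update_of_ne (Ne.symm h)])
          (by simp [SOLit.Sat])
    | ex i' =>
      exact falsify_case A s fo _ _ (fun _ => ∅) (by simp [SOLit.Sat])
        (by simp [SOLit.Sat])
    | bot =>
      exact falsify_case A s fo _ _ (fun _ => ∅) (by simp [SOLit.Sat])
        (by simp [SOLit.Sat])
  | bot =>
    cases H2 with
    | pos i' a2 =>
      exact falsify_case A s fo _ _ (fun _ => ∅) (by simp [SOLit.Sat])
        (by simp [SOLit.Sat])
    | neg i' a2 =>
      exact falsify_case A s fo _ _ (fun _ => Set.univ) (by simp [SOLit.Sat])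
        (by simp [SOLit.Sat])
    | ex i' =>
      exact falsify_case A s fo _ _ (fun _ => ∅) (by simp [SOLit.Sat])
        (by simp [SOLit.Sat])
    | bot =>
      exact falsify_case A s fo _ _ (fun _ => ∅) (by simp [SOLit.Sat])
        (by simp [SOLit.Sat])

/-- With an all-universal prefix, `satAux` just says the matrix holds for all
valuations extending the current one. -/
lemma satAux_char (Φ : KromR σ) (hq : ∀ i, Φ.qt i = false) (A : Struct σ)
    (e : ℕ → A.Dom) :
    ∀ (n j : ℕ), Φ.m - j = n → ∀ V : Val Φ.m Φ.ar A.Dom,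
      (Φ.satAux A e V j ↔
        ∀ V' : Val Φ.m Φ.ar A.Dom, (∀ i : Fin Φ.m, (i : ℕ) < j → V' i = V i) →
          Φ.Matrix A V' e) := by
  intro n
  induction n with
  | zero =>
    intro j hn V
    have hj : ¬ j < Φ.m := by omega
    rw [KromR.satAux, dif_neg hj]
    constructor
    · intro hM V' hV'
      have : V' = V := funext fun i => hV' i (lt_of_lt_of_le i.isLt (by omega))
      rwa [this]
    · intro H; exact H V fun _ _ => rfl
  | succ n ih =>
    intro j hn V
    have hj : j < Φ.m := by omega
    rw [KromR.satAux, dif_pos hj, hq ⟨j, hj⟩]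
    simp only [Bool.false_eq_true, if_false]
    constructor
    · intro H V' hV'
      refine (ih (j + 1) (by omega) _).1 (H (V' ⟨j, hj⟩)) V' ?_
      intro i hi
      rcases Nat.lt_succ_iff_lt_or_eq.1 hi with hi | hi
      · rw [Function.update_of_ne (by
          intro hc; rw [hc] at hi; simp at hi), hV' i hi]
      · have : i = ⟨j, hj⟩ := Fin.ext hi
        rw [this, Function.update_self]
    · intro H S
      rw [ih (j + 1) (by omega) _]
      intro V' hV'
      refine H V' fun i hi => ?_
      rw [hV' i (Nat.lt_succ_of_lt hi),
        Function.update_of_ne (by intro hc; rw [hc] at hi; simp at hi)]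

lemma all_eq_of_altCount_zero :
    ∀ (l : List Bool) (b : Bool), l.head? = some b → altCount l = 0 →
      ∀ x ∈ l, x = b := by
  intro l
  induction l with
  | nil => intro b h; simp at h
  | cons a t ih =>
    intro b hh ha x hx
    simp only [List.head?_cons, Option.some.injEq] at hh
    subst hh
    cases t with
    | nil => simpa using hx
    | cons c t' =>
      rw [altCount] at ha
      have hac : a = c := by
        by_contra hne
        simp [hne] at ha
      have ht : altCount (c :: t') = 0 := by omega
      rcases List.mem_cons.1 hx with rfl | hx
      · rfl
      · exact ih a (by simp [hac]) ht x hx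
      
end Aux

/-- Every `Π¹₁`-KROM^r formula is equivalent on all finite structures to a
first-order formula `∀x̄ φ` with `φ` quantifier-free and in CNF. -/
theorem pi1_kromr_equals_universal_cnf (σ : Vocab) (Φ : KromR σ) (h : Φ.IsPi 1) :
    ∃ φ : UnivCNF σ, ∀ (A : Struct σ) [Fintype A.Dom] [Nonempty A.Dom]
      (e : ℕ → A.Dom), Φ.Sat A e ↔ φ.Sat A e := by
  have hq : ∀ i, Φ.qt i = false := by
    intro i
    exact all_eq_of_altCount_zero Φ.prefixList false h.1 h.2 (Φ.qt i)
      (by simp [KromR.prefixList, List.mem_ofFn])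
  refine ⟨⟨Φ.nvars, Φ.clauses.flatMap fun C => soPairCNF C.fo C.h1 C.h2⟩,
    fun A _ _ e => ?_⟩
  have hsat : Φ.Sat A e ↔ ∀ V : Val Φ.m Φ.ar A.Dom, Φ.Matrix A V e := by
    rw [KromR.Sat, satAux_char Φ hq A e (Φ.m - 0) 0 rfl]
    constructor
    · intro H V; exact H V (by simp)
    · intro H V _; exact H V
  rw [hsat]
  unfold KromR.Matrix UnivCNF.Sat
  constructor
  · intro H s hs D hD
    rcases List.mem_flatMap.1 hD with ⟨C, hC, hDC⟩
    exact (pair_char A s C.fo C.h1 C.h2).1 (fun V => H V s hs C hC) D hDC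
  · intro H V s hs C hC
    exact (pair_char A s C.fo C.h1 C.h2).2
      (fun D hD => H s hs D (List.mem_flatMap.2 ⟨C, hC, hD⟩)) V

end SOKrom
end

section
/- Let A be a type, let n and k be natural numbers, let P : (Fin n → A) → Prop, and let f, g : (Fin n → A) → (Fin k → A). Then (∀ X : Set (Fin k → A), ∀ x : Fin n → A, P x ∨ f x ∈ X ∨ g x ∉ X) holds if and only if (∀ x : Fin n → A, P x ∨ f x = g x) holds. -/
/-- Eliminating a universal second-order quantifier from a Krom clause with one
positive and one negative literal of the quantified relation variable:
`∀X ∀x̄ (α ∨ X x̄₁ ∨ ¬X x̄₂)` is equivalent to `∀x̄ (α ∨ x̄₁ = x̄₂)`. -/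
theorem krom_clause_case2 (A : Type) (n k : ℕ) (P : (Fin n → A) → Prop)
    (f g : (Fin n → A) → (Fin k → A)) :
    (∀ X : Set (Fin k → A), ∀ x : Fin n → A, P x ∨ f x ∈ X ∨ g x ∉ X) ↔
      (∀ x : Fin n → A, P x ∨ f x = g x) := by
  constructor
  · intro h x
    rcases h {f x}ᶜ x with hp | hf | hg
    · exact Or.inl hp
    · exact absurd rfl hf
    · simp only [Set.mem_compl_iff, Set.mem_singleton_iff, not_not] at hg
      exact Or.inr hg.symm
  · intro h X x
    rcases h x with hp | he
    · exact Or.inl hp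
    · by_cases hx : g x ∈ X
      · exact Or.inr (Or.inl (he ▸ hx))
      · exact Or.inr (Or.inr hx)
end

section
/- Let A be a nonempty type, n ≥ 1, and θ : (Fin n → A) → (Fin n → A) → Prop. The following are equivalent: (1) there exist functions F : Fin n → (Fin n → A) → A such that for every i, the value F i x depends only on the values x j for j ≤ i (i.e., if x j = x' j for all j ≤ i then F i x = F i x'), and for every x : Fin n → A, θ x (fun i => F i x) holds; (2) there exists a relation Y : Set ((Fin n → A) × (Fin n → A)) such that: (totality) for every x there exists y with (x, y) ∈ Y; (functional dependency) for all (x, y) ∈ Y and (x', y') ∈ Y and all i : Fin n, if x j = x' j for all j ≤ i then y i = y' i; and (soundness) for all (x, y) ∈ Y, θ x y holds. -/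
/-- Encoding a system of Skolem functions by a single relation: a family of
functions `F i` (each depending only on the arguments `x j` for `j ≤ i`)
satisfying `θ x (fun i => F i x)` exists iff there is a total relation `Y`
with the corresponding functional dependency whose pairs all satisfy `θ`. -/
theorem skolem_functions_iff_relation (A : Type) [Nonempty A] (n : ℕ)
    (hn : 1 ≤ n) (θ : (Fin n → A) → (Fin n → A) → Prop) :
    (∃ F : Fin n → (Fin n → A) → A,
      (∀ (i : Fin n) (x x' : Fin n → A),
        (∀ j ≤ i, x j = x' j) → F i x = F i x') ∧
      (∀ x : Fin n → A, θ x (fun i => F i x))) ↔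
    (∃ Y : Set ((Fin n → A) × (Fin n → A)),
      (∀ x : Fin n → A, ∃ y : Fin n → A, (x, y) ∈ Y) ∧
      (∀ x y x' y' : Fin n → A, (x, y) ∈ Y → (x', y') ∈ Y →
        ∀ i : Fin n, (∀ j ≤ i, x j = x' j) → y i = y' i) ∧
      (∀ x y : Fin n → A, (x, y) ∈ Y → θ x y)) := by
  constructor
  · rintro ⟨F, hdep, hθ⟩
    refine ⟨{p | p.2 = fun i => F i p.1}, fun x => ⟨fun i => F i x, rfl⟩, ?_, ?_⟩
    · rintro x y x' y' hy hy' i hag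
      simp only [Set.mem_setOf_eq] at hy hy'
      subst hy; subst hy'
      exact hdep i x x' hag
    · rintro x y hy
      simp only [Set.mem_setOf_eq] at hy
      subst hy; exact hθ x
  · rintro ⟨Y, htot, hfun, hθ⟩
    choose g hg using htot
    set tr : Fin n → (Fin n → A) → (Fin n → A) :=
      fun i x j => if j ≤ i then x j else Classical.arbitrary A with htr
    have key : ∀ (i : Fin n) (x : Fin n → A), g (tr i x) i = g x i := by
      intro i x
      exact hfun _ _ _ _ (hg (tr i x)) (hg x) i (fun j hj => by simp [htr, hj])
    refine ⟨fun i x => g (tr i x) i, ?_, ?_⟩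
    · intro i x x' hag
      have : tr i x = tr i x' := by
        funext j
        by_cases h : j ≤ i <;> simp [htr, h, hag j]
      simp only []
      rw [this]
    · intro x
      have : (fun i => g (tr i x) i) = g x := funext fun i => key i x
      rw [this]
      exact hθ x (g x) (hg x)
end

section
/- Every SO-EKROM formula is closed under substructures: if a finite τ-structure 𝔄 satisfies an SO-EKROM formula Φ, then every substructure of 𝔄 also satisfies Φ. -/
namespace SOKrom

/-!
Restricting every second-order relation to tuples from `D` preserves the truth of each
literal at assignments into `D`, hence of the universal first-order matrix. Along the
prefix, an existential witness in `A` restricts to a witness over `D`, and a universal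
choice `S` over `D` is the restriction of its image in `A`, which the universal quantifier
over `A` covers.
-/

def Val.restrict {m : ℕ} {ar : Fin m → ℕ} {α : Type} (D : Set α) (V : Val m ar α) :
    Val m ar D :=
  fun i => (Subtype.val ∘ ·) ⁻¹' V i

section Restrict

variable {m : ℕ} {ar : Fin m → ℕ} {α : Type} (D : Set α)

theorem Val.restrict_update (V : Val m ar α) (i : Fin m) (S : Set (Fin (ar i) → α)) :
    Val.restrict D (Function.update V i S) =
      Function.update (Val.restrict D V) i ((Subtype.val ∘ ·) ⁻¹' S) := by
  funext k
  exact Function.apply_update (fun k (T : Set (Fin (ar k) → α)) => (Subtype.val ∘ ·) ⁻¹' T)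
    V i S k

theorem preimage_image_subtypeVal_comp {ι : Type*} (S : Set (ι → D)) :
    (Subtype.val ∘ ·) ⁻¹' ((Subtype.val ∘ ·) '' S) = S :=
  Set.preimage_image_eq S Subtype.val_injective.comp_left

theorem HLit.sat_restrict_iff (V : Val m ar α) (s : ℕ → D) (H : HLit m ar) :
    H.Sat (Val.restrict D V) s ↔ H.Sat V (Subtype.val ∘ s) := by
  unfold HLit.Sat
  split_ifs <;> rfl

end Restrict

variable {σ : Vocab} {m : ℕ} {ar : Fin m → ℕ} (A : Struct σ) (D : Set A.Dom)

theorem ELit.sat_substruct_iff (V : Val m ar A.Dom) (s : ℕ → D) (l : ELit σ m ar) :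
    l.Sat (Substruct A D) (Val.restrict D V) s ↔ l.Sat A V (Subtype.val ∘ s) := by
  cases l with
  | eq a b => exact Subtype.ext_iff
  | ne a b => exact not_congr Subtype.ext_iff
  | _ => rfl

theorem EClause.sat_substruct_iff (V : Val m ar A.Dom) (s : ℕ → D) (C : EClause σ m ar) :
    C.Sat (Substruct A D) (Val.restrict D V) s ↔ C.Sat A V (Subtype.val ∘ s) :=
  or_congr (exists_congr fun l => and_congr_right fun _ => ELit.sat_substruct_iff A D V s l)
    (or_congr (HLit.sat_restrict_iff D V s C.h1) (HLit.sat_restrict_iff D V s C.h2))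

theorem EKrom.matrix_substruct (Φ : EKrom σ) (V : Val Φ.m Φ.ar A.Dom) (e : ℕ → D)
    (h : Φ.Matrix A V (Subtype.val ∘ e)) :
    Φ.Matrix (Substruct A D) (Val.restrict D V) e := fun s hs C hC =>
  (EClause.sat_substruct_iff A D V s C).2
    (h _ (fun j hj => congrArg Subtype.val (hs j hj)) C hC)

theorem EKrom.satAux_substruct (Φ : EKrom σ) (e : ℕ → D) (V : Val Φ.m Φ.ar A.Dom) (j : ℕ)
    (h : Φ.satAux A (Subtype.val ∘ e) V j) :
    Φ.satAux (Substruct A D) e (Val.restrict D V) j := by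
  -- `erw`: the goal mentions `(Substruct A D).Dom` and `↥D`, equal only after unfolding
  erw [EKrom.satAux] at h ⊢
  split_ifs at h ⊢ with hj
  · obtain ⟨S, hS⟩ := h
    refine ⟨(Subtype.val ∘ ·) ⁻¹' S, ?_⟩
    exact Val.restrict_update D V _ S ▸ Φ.satAux_substruct e _ (j + 1) hS
  · intro (S : Set (Fin _ → D))
    have hrestrict : Val.restrict D (Function.update V _ ((Subtype.val ∘ ·) '' S)) =
        Function.update (Val.restrict D V) _ S := by
      rw [Val.restrict_update, preimage_image_subtypeVal_comp]
    exact hrestrict ▸ Φ.satAux_substruct e _ (j + 1) (h _)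
  · exact Φ.matrix_substruct A D V e h
termination_by Φ.m - j

theorem ekrom_closed_under_substructures_general (σ : Vocab) (Φ : EKrom σ)
    (A : Struct σ) (D : Set A.Dom) (e : ℕ → D)
    (h : Φ.Sat A (fun n => (e n : A.Dom))) :
    Φ.Sat (Substruct A D) e :=
  Φ.satAux_substruct A D e _ 0 h

/-- SO-EKROM formulas are closed under substructures: if a finite structure
`A` satisfies an SO-EKROM formula (under an environment taking values in a
nonempty subset `D` of the domain), then the substructure induced by `D` also
satisfies it. -/
theorem ekrom_closed_under_substructures (σ : Vocab) (Φ : EKrom σ)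
    (A : Struct σ) [Fintype A.Dom] [Nonempty A.Dom] (D : Set A.Dom)
    (hD : D.Nonempty) (e : ℕ → D)
    (h : Φ.Sat A (fun n => (e n : A.Dom))) :
    Φ.Sat (Substruct A D) e :=
  ekrom_closed_under_substructures_general σ Φ A D e h

end SOKrom
end
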